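/- Let G act trace-preservingly on (M,τ), A globally invariant finitely generated unital *-subalgebra with A = C⟨X⟩ for a finite self-adjoint X, and set Y = X ∪ {u_g : g∈G}. For d ∈ Der(A,τ) and distinct h, h' ∈ G, the extended derivations d^h and d^{h'} on A⋊_α G (as defined via d^h(Σ a_k u_k) = J(u_e⊗(u_h*)°)J Σ_{k,g} u_g*·d(α_g(a_k))·u_g u_k) are orthogonal with respect to the inner product ⟨d₁,d₂⟩_Y = Σ_{y∈Y} ⟨d₁(y), d₂(y)⟩. -/

import Mathlib

/-! For `x ∈ A` the only coefficient of `x` in `A ⋊_α G` sits at `e`, so `d^h(x)` is built from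
the vectors `u_g* · d(α_g x) · u_g` of the summands `(g⁻¹, g)`, moved by the right action of
`u_h*` into the summands `(g⁻¹, g h)`. Thus `d^h(x)` lives in the summands `(a, a⁻¹ h)`, and for
`h ≠ h'` these are disjoint from those of `d^{h'}(x)`, hence orthogonal to them. On the unitaries
`u_g` the coefficients are `0` or `1`, which `d` kills, so both extensions vanish there. -/

noncomputable section

open scoped BigOperators

local notation "⟪" x ", " y "⟫" => @inner ℂ _ _ x y

/-- A complete space instance for `PiLp` (finite or infinite products of complete spaces). -/
instance piLpCompleteSpace {ι : Type*} {β : ι → Type*} (p : ENNReal) [∀ i, UniformSpace (β i)]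
    [∀ i, CompleteSpace (β i)] : CompleteSpace (PiLp p β) :=
  (PiLp.uniformEquiv p β).completeSpace_iff.2 (inferInstance : CompleteSpace (∀ i, β i))

/-- The "von Neumann dimension" of (the closure of) a subspace `K` of a Hilbert module,
computed as the trace of the orthogonal projection onto its closure, the trace being the
sum of the vector states at the given finite family `v` of canonical trace vectors. -/
noncomputable def vnDim {F : Type*} [NormedAddCommGroup F] [InnerProductSpace ℂ F]
    [CompleteSpace F] {κ : Type*} (s : Finset κ) (v : κ → F) (K : Submodule ℂ F) : ℝ :=
  haveI : CompleteSpace K.topologicalClosure :=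
    K.isClosed_topologicalClosure.completeSpace_coe
  ∑ k ∈ s, (⟪((K.topologicalClosure.orthogonalProjectionOnto (v k) : F)), v k⟫).re

/-- An element of an `ι`-indexed `L²`-direct sum supported at `i` with value `x`. -/
noncomputable def sngl {ι : Type*} {E : Type*} [NormedAddCommGroup E] (i : ι) (x : E) :
    PiLp 2 (fun _ : ι => E) :=
  letI := Classical.decEq ι
  (WithLp.equiv 2 _).symm (Pi.single i x)

/-- The setting of the paper: a trace preserving action `α` of a finite group `G` on a tracial
von Neumann algebra, a globally invariant finitely generated unital `*`-subalgebra `A`, the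
algebraic crossed product `B = A ⋊_α G` (with implementing unitaries `u g` and coefficients
`coef`), the coarse bimodules `H0 = L²(A ⊗ A°)` and `H = L²(B ⊗ B°)` with their commuting
left/right multiplication actions `lm0, rm0, l20` resp. `lm, rm, l2` (first-leg left, second-leg
right, second-leg left), the Tomita conjugations `J0`, `J`, the trace vectors `xi0 = 1 ⊗ 1°`,
the summand projections `p g h` onto `L²(A ⊗ A°)(u_g ⊗ u_h°)`, the isometric identification
`ι` of `H0` with the `(e,e)`-summand, the GNS spaces `L2A = L²(A,τ)`, `L2B = L²(B,τ)` and the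
finite-rank subspaces `FR0 ⊆ H0`, `FRB ⊆ H` corresponding to `L² ⊙ L²`. -/
structure CP (G : Type*) [Group G] [Fintype G] where
  /-- the `*`-algebra `A` -/
  A : Type*
  [ringA : Ring A]
  [algA : Algebra ℂ A]
  [starA : StarRing A]
  [starMA : StarModule ℂ A]
  /-- the action of `G` on `A` by trace preserving `*`-automorphisms -/
  α : G →* (A ≃ₐ[ℂ] A)
  α_star : ∀ g (a : A), α g (star a) = star (α g a)
  /-- the crossed product `B = A ⋊_α G` -/
  B : Type*
  [ringB : Ring B]
  [algB : Algebra ℂ B]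
  [starB : StarRing B]
  [starMB : StarModule ℂ B]
  /-- the inclusion `A ⊆ B` -/
  j : A →⋆ₐ[ℂ] B
  jinj : Function.Injective j
  /-- the implementing unitaries -/
  u : G → B
  u_mul : ∀ g h, u g * u h = u (g * h)
  u_one : u 1 = 1
  u_star : ∀ g, star (u g) = u g⁻¹
  cov : ∀ g a, u g * j a = j (α g a) * u g
  /-- coefficients of the unique decomposition `b = ∑ g, j (coef b g) * u g` -/
  coef : B → G → A
  coef_spec : ∀ b : B, b = ∑ g : G, j (coef b g) * u g
  coef_unique : ∀ (b : B) (c : G → A), b = ∑ g : G, j (c g) * u g → c = coef b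
  /-- the coarse bimodule `H0 = L²(A ⊗ A°, τ ⊗ τ°)` -/
  H0 : Type*
  [nH0 : NormedAddCommGroup H0]
  [ipH0 : InnerProductSpace ℂ H0]
  [cH0 : CompleteSpace H0]
  /-- first-leg left multiplication `a · ξ` on `H0` -/
  lm0 : A → H0 →ₗ[ℂ] H0
  lm0_one : lm0 1 = LinearMap.id
  lm0_mul : ∀ a b, lm0 (a * b) = (lm0 a).comp (lm0 b)
  lm0_add : ∀ a b, lm0 (a + b) = lm0 a + lm0 b
  lm0_smul : ∀ (c : ℂ) a, lm0 (c • a) = c • lm0 a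
  /-- second-leg right multiplication `ξ · a` on `H0` -/
  rm0 : A → H0 →ₗ[ℂ] H0
  rm0_one : rm0 1 = LinearMap.id
  rm0_mul : ∀ a b, rm0 (a * b) = (rm0 b).comp (rm0 a)
  rm0_add : ∀ a b, rm0 (a + b) = rm0 a + rm0 b
  rm0_smul : ∀ (c : ℂ) a, rm0 (c • a) = c • rm0 a
  lm0_rm0_comm : ∀ a b, (lm0 a).comp (rm0 b) = (rm0 b).comp (lm0 a)
  /-- second-leg left multiplication (commutant direction) on `H0` -/
  l20 : A → H0 →ₗ[ℂ] H0
  l20_one : l20 1 = LinearMap.id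
  l20_mul : ∀ a b, l20 (a * b) = (l20 a).comp (l20 b)
  l20_lm0_comm : ∀ a b, (l20 a).comp (lm0 b) = (lm0 b).comp (l20 a)
  l20_rm0_comm : ∀ a b, (l20 a).comp (rm0 b) = (rm0 b).comp (l20 a)
  /-- the trace vector `1 ⊗ 1° ∈ L²(A ⊗ A°)` -/
  xi0 : H0
  xi0_norm : ‖xi0‖ = 1
  /-- the Tomita conjugation on `H0` -/
  J0 : H0 →ₛₗ[starRingEnd ℂ] H0
  J0_inv : ∀ ξ, J0 (J0 ξ) = ξ
  J0_inner : ∀ ξ η, ⟪J0 ξ, J0 η⟫ = ⟪η, ξ⟫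
  J0_xi0 : J0 xi0 = xi0
  /-- the coarse bimodule `H = L²(B ⊗ B°, τ ⊗ τ°)` of the crossed product -/
  H : Type*
  [nH : NormedAddCommGroup H]
  [ipH : InnerProductSpace ℂ H]
  [cH : CompleteSpace H]
  lm : B → H →ₗ[ℂ] H
  lm_one : lm 1 = LinearMap.id
  lm_mul : ∀ x y, lm (x * y) = (lm x).comp (lm y)
  lm_add : ∀ x y, lm (x + y) = lm x + lm y
  lm_smul : ∀ (c : ℂ) x, lm (c • x) = c • lm x
  rm : B → H →ₗ[ℂ] H
  rm_one : rm 1 = LinearMap.id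
  rm_mul : ∀ x y, rm (x * y) = (rm y).comp (rm x)
  rm_add : ∀ x y, rm (x + y) = rm x + rm y
  rm_smul : ∀ (c : ℂ) x, rm (c • x) = c • rm x
  lm_rm_comm : ∀ x y, (lm x).comp (rm y) = (rm y).comp (lm x)
  l2 : B → H →ₗ[ℂ] H
  l2_one : l2 1 = LinearMap.id
  l2_mul : ∀ x y, l2 (x * y) = (l2 x).comp (l2 y)
  l2_lm_comm : ∀ x y, (l2 x).comp (lm y) = (lm y).comp (l2 x)
  l2_rm_comm : ∀ x y, (l2 x).comp (rm y) = (rm y).comp (l2 x)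
  /-- the Tomita conjugation on `H` -/
  J : H →ₛₗ[starRingEnd ℂ] H
  J_inv : ∀ ξ, J (J ξ) = ξ
  J_inner : ∀ ξ η, ⟪J ξ, J η⟫ = ⟪η, ξ⟫
  /-- the projections onto the summands `L²(A ⊗ A°)(u_g ⊗ u_h°)` -/
  p : G → G → H →ₗ[ℂ] H
  p_idem : ∀ g h, (p g h).comp (p g h) = p g h
  p_orth : ∀ g h g' h', (g, h) ≠ (g', h') → (p g h).comp (p g' h') = 0
  p_sum : ∑ g : G, ∑ h : G, p g h = LinearMap.id
  p_sa : ∀ g h ξ η, ⟪p g h ξ, η⟫ = ⟪ξ, p g h η⟫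
  p_lm_u : ∀ k g h, (p g h).comp (lm (u k)) = (lm (u k)).comp (p (k⁻¹ * g) h)
  p_rm_u : ∀ k g h, (p g h).comp (rm (u k)) = (rm (u k)).comp (p g (h * k⁻¹))
  p_l2_u : ∀ k g h, (p g h).comp (l2 (u k)) = (l2 (u k)).comp (p g (k⁻¹ * h))
  p_lm_j : ∀ (a : A) g h, (p g h).comp (lm (j a)) = (lm (j a)).comp (p g h)
  p_rm_j : ∀ (a : A) g h, (p g h).comp (rm (j a)) = (rm (j a)).comp (p g h)
  p_l2_j : ∀ (a : A) g h, (p g h).comp (l2 (j a)) = (l2 (j a)).comp (p g h)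
  p_J : ∀ g h ξ, p g h (J ξ) = J (p g⁻¹ h⁻¹ ξ)
  /-- the identification of `H0` with the `(e,e)`-summand of `H` -/
  ι : H0 →ₗᵢ[ℂ] H
  ιinv : H →ₗ[ℂ] H0
  ιinv_ι : ∀ ξ, ιinv (ι ξ) = ξ
  ι_ιinv : ∀ η, ι (ιinv (p 1 1 η)) = p 1 1 η
  p_ι : ∀ ξ, p 1 1 (ι ξ) = ι ξ
  ι_lm : ∀ a ξ, lm (j a) (ι ξ) = ι (lm0 a ξ)
  ι_rm : ∀ a ξ, rm (j a) (ι ξ) = ι (rm0 a ξ)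
  ι_l2 : ∀ a ξ, l2 (j a) (ι ξ) = ι (l20 a ξ)
  ι_J : ∀ ξ, J (ι ξ) = ι (J0 ξ)
  /-- the GNS space `L²(A, τ)` with the canonical embedding of `A` -/
  L2A : Type*
  [nL2A : NormedAddCommGroup L2A]
  [ipL2A : InnerProductSpace ℂ L2A]
  [cL2A : CompleteSpace L2A]
  hatA : A →ₗ[ℂ] L2A
  hatA_dense : (Submodule.span ℂ (Set.range hatA)).topologicalClosure = ⊤
  /-- the GNS space `L²(B, τ)` with the canonical embedding of `B` -/
  L2B : Type*
  [nL2B : NormedAddCommGroup L2B]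
  [ipL2B : InnerProductSpace ℂ L2B]
  [cL2B : CompleteSpace L2B]
  hatB : B →ₗ[ℂ] L2B
  hatB_dense : (Submodule.span ℂ (Set.range hatB)).topologicalClosure = ⊤
  /-- the finite-rank subspace `L²(A) ⊙ L²(A°) ⊆ H0` -/
  FR0 : Submodule ℂ H0
  FR0_dense : FR0.topologicalClosure = ⊤
  FR0_mem : ∀ a b, lm0 a (rm0 b xi0) ∈ FR0
  /-- the finite-rank subspace `L²(B) ⊙ L²(B°) ⊆ H` -/
  FRB : Submodule ℂ H
  FRB_dense : FRB.topologicalClosure = ⊤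
  FRB_mem : ∀ x y, lm x (rm y (ι xi0)) ∈ FRB

attribute [instance] CP.ringA CP.algA CP.starA CP.starMA CP.ringB CP.algB CP.starB CP.starMB
attribute [instance] CP.nH0 CP.ipH0 CP.cH0 CP.nH CP.ipH CP.cH
attribute [instance] CP.nL2A CP.ipL2A CP.cL2A CP.nL2B CP.ipL2B CP.cL2B

namespace CP

variable {G : Type*} [Group G] [Fintype G] (S : CP G)

/-- `d : A → L²(A ⊗ A°)` is a derivation. -/
def IsDerA (d : S.A → S.H0) : Prop :=
  (∀ x y, d (x + y) = d x + d y) ∧ (∀ (c : ℂ) (x : S.A), d (c • x) = c • d x) ∧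
    (∀ x y, d (x * y) = S.lm0 x (d y) + S.rm0 y (d x))

/-- `D : B → L²(B ⊗ B°)` is a derivation. -/
def IsDerB (D : S.B → S.H) : Prop :=
  (∀ x y, D (x + y) = D x + D y) ∧ (∀ (c : ℂ) (x : S.B), D (c • x) = c • D x) ∧
    (∀ x y, D (x * y) = S.lm x (D y) + S.rm y (D x))

/-- `D` vanishes on `ℂ[G] = span {u_g}`. -/
def VanishCG (D : S.B → S.H) : Prop :=
  ∀ x ∈ Submodule.span ℂ (Set.range S.u), D x = 0

/-- The operator `J (x ⊗ y°) J` on `L²(B ⊗ B°)`, an element of the commutant. -/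
def Jmul (x y : S.B) (ξ : S.H) : S.H := S.J (S.lm x (S.l2 y (S.J ξ)))

/-- The right action of `(x ⊗ y°)* = J(x ⊗ y°)J` on derivations' values:
`(D · (x ⊗ y°))(b) = J (x ⊗ y°)* J (D b)`. -/
def ract (x y : S.B) (ξ : S.H) : S.H := S.Jmul (star x) (star y) ξ

/-- The right action of `(x ⊗ y°)*` on `L²(A ⊗ A°)`. -/
def ract0 (x y : S.A) (ξ : S.H0) : S.H0 := S.J0 (S.lm0 (star x) (S.l20 (star y) (S.J0 ξ)))

/-- The extension `d^h` of a derivation `d ∈ Der(A, τ)` to a derivation of `A ⋊_α G`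
vanishing on `ℂ[G]`:
`d^h(∑ a_k u_k) = J(u_e ⊗ (u_h*)°)J ∑_{k,g} u_g* · d(α_g(a_k)) · (u_g u_k)`. -/
def ext (d : S.A → S.H0) (h : G) (b : S.B) : S.H :=
  S.Jmul 1 (star (S.u h)) (∑ k : G, ∑ g : G,
    S.lm (star (S.u g)) (S.rm (S.u g * S.u k) (S.ι (d (S.α g (S.coef b k))))))

/-- The compression `D_{g,h} = J(u_g ⊗ u_h°)J ∘ p_{g,h} ∘ D|_A` of a derivation of
`A ⋊_α G`, viewed as valued in `L²(A ⊗ A°)`. -/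
def cmp (D : S.B → S.H) (g h : G) (a : S.A) : S.H0 :=
  S.ιinv (S.Jmul (S.u g) (S.u h) (S.p g h (D (S.j a))))

/-- The inner product `⟨D₁, D₂⟩_Y = ∑_{y ∈ Y} ⟨D₁(y), D₂(y)⟩` on derivations coming from a
generating set `Y`. -/
def dip (Y : Finset S.B) (D₁ D₂ : S.B → S.H) : ℂ := ∑ y ∈ Y, ⟪D₁ y, D₂ y⟫

/-- The inner product on derivations of `A` coming from a generating set `X`. -/
def dipA (X : Finset S.A) (d₁ d₂ : S.A → S.H0) : ℂ := ∑ x ∈ X, ⟪d₁ x, d₂ x⟫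

/-- The image `φ_X(d) = (d(x))_{x ∈ X}` of a derivation of `A`. -/
def phiA (X : Finset S.A) (d : S.A → S.H0) : PiLp 2 (fun _ : {x // x ∈ X} => S.H0) :=
  WithLp.toLp 2 (fun x => d x.1)

/-- The image `φ_Y(D) = (D(y))_{y ∈ Y}` of a derivation of `B`. -/
def phiB (Y : Finset S.B) (D : S.B → S.H) : PiLp 2 (fun _ : {y // y ∈ Y} => S.H) :=
  WithLp.toLp 2 (fun y => D y.1)

/-- The von Neumann dimension over `(A ⊗ A°)''` of a set of derivations of `A`,
with respect to the generating set `X`. -/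
noncomputable def vdimA (X : Finset S.A) (𝒟 : Set (S.A → S.H0)) : ℝ :=
  vnDim Finset.univ (fun x : {x // x ∈ X} => sngl x S.xi0)
    (Submodule.span ℂ (S.phiA X '' 𝒟))

/-- The von Neumann dimension over `(B ⊗ B°)''` of a set of derivations of `B = A ⋊_α G`,
with respect to the generating set `Y`; the trace vector of `L²(B ⊗ B°)` is `ι xi0 = 1 ⊗ 1°`. -/
noncomputable def vdimB (Y : Finset S.B) (𝒟 : Set (S.B → S.H)) : ℝ :=
  vnDim Finset.univ (fun y : {y // y ∈ Y} => sngl y (S.ι S.xi0))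
    (Submodule.span ℂ (S.phiB Y '' 𝒟))

/-- The von Neumann dimension over the smaller algebra `(A ⊗ A°)''` of a set of derivations of
`B = A ⋊_α G`: `L²(B ⊗ B°)` is the direct sum of `|G|²` copies of `L²(A ⊗ A°)` with trace
vectors `u_g ⊗ u_h° = (u_g) · (1 ⊗ 1°) · (u_h)`. -/
noncomputable def vdimBoverA (Y : Finset S.B) (𝒟 : Set (S.B → S.H)) : ℝ :=
  vnDim Finset.univ
    (fun z : {y // y ∈ Y} × G × G =>
      sngl z.1 (S.lm (S.u z.2.1) (S.rm (S.u z.2.2) (S.ι S.xi0))))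
    (Submodule.span ℂ (S.phiB Y '' 𝒟))

/-- `X` is a finite self-adjoint generating set of `A`. -/
def GenA (X : Finset S.A) : Prop :=
  (∀ x ∈ X, star x ∈ X) ∧ Algebra.adjoin ℂ (X : Set S.A) = ⊤

/-- `Y` is a finite self-adjoint generating set of `B`. -/
def GenB (Y : Finset S.B) : Prop :=
  (∀ y ∈ Y, star y ∈ Y) ∧ Algebra.adjoin ℂ (Y : Set S.B) = ⊤

/-- `1 ⊗ 1°` belongs to the domain of `d*`, where `d` is viewed as a densely defined operator
`L²(A, τ) → L²(A ⊗ A°, τ ⊗ τ°)`. -/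
def Dom11A (d : S.A → S.H0) : Prop :=
  ∃ η : S.L2A, ∀ a : S.A, ⟪S.xi0, d a⟫ = ⟪η, S.hatA a⟫

/-- `1 ⊗ 1°` belongs to the domain of `D*` for a derivation of `B`. -/
def Dom11B (D : S.B → S.H) : Prop :=
  ∃ η : S.L2B, ∀ b : S.B, ⟪S.ι S.xi0, D b⟫ = ⟪η, S.hatB b⟫

end CP

namespace CP

variable {G : Type*} [Group G] [Fintype G] (S : CP G)

lemma p_p_of_ne {a b c e : G} (hne : (a, b) ≠ (c, e)) (ξ : S.H) : S.p a b (S.p c e ξ) = 0 :=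
  LinearMap.congr_fun (S.p_orth a b c e hne) ξ

lemma p_ι_of_ne {a b : G} (hne : (a, b) ≠ (1, 1)) (ξ : S.H0) : S.p a b (S.ι ξ) = 0 := by
  rw [← S.p_ι ξ, S.p_p_of_ne hne]

lemma p_lm_u_rm_u_ι_of_ne {a b g k : G} (hne : (a, b) ≠ (g, k)) (ξ : S.H0) :
    S.p a b (S.lm (S.u g) (S.rm (S.u k) (S.ι ξ))) = 0 := by
  have hne' : (g⁻¹ * a, b * k⁻¹) ≠ (1, 1) := by
    simp only [ne_eq, Prod.mk.injEq, inv_mul_eq_one, mul_inv_eq_one] at hne ⊢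
    rintro ⟨rfl, rfl⟩
    exact hne ⟨rfl, rfl⟩
  rw [← LinearMap.comp_apply, S.p_lm_u, LinearMap.comp_apply, ← LinearMap.comp_apply (S.p _ _),
    S.p_rm_u, LinearMap.comp_apply, S.p_ι_of_ne hne', map_zero, map_zero]

lemma p_Jmul_one_star_u (a b h : G) (ξ : S.H) :
    S.p a b (S.Jmul 1 (star (S.u h)) ξ) = S.J (S.l2 (S.u h⁻¹) (S.J (S.p a (b * h⁻¹) ξ))) := by
  rw [Jmul, S.u_star, S.lm_one, LinearMap.id_apply, S.p_J,
    ← LinearMap.comp_apply (S.p a⁻¹ b⁻¹), S.p_l2_u, LinearMap.comp_apply, S.p_J, inv_inv,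
    mul_inv_rev, inv_inv, inv_inv]

lemma inner_eq_zero_of_p_disjoint {ξ η : S.H} (hdisj : ∀ a b, S.p a b ξ = 0 ∨ S.p a b η = 0) :
    ⟪ξ, η⟫ = 0 := by
  have hη : η = ∑ a, ∑ b, S.p a b η := by
    simpa using (LinearMap.congr_fun S.p_sum η).symm
  rw [hη, inner_sum]
  refine Finset.sum_eq_zero fun a _ => ?_
  rw [inner_sum]
  refine Finset.sum_eq_zero fun b _ => ?_
  rcases hdisj a b with hξ | hη
  · rw [← S.p_sa, hξ, inner_zero_left]
  · rw [hη, inner_zero_right]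

lemma coef_j_mul_u [DecidableEq G] (x : S.A) (m : G) : S.coef (S.j x * S.u m) = Pi.single m x :=
  (S.coef_unique _ _ (by rw [Fintype.sum_eq_single m fun k hk => by simp [hk]]; simp)).symm

lemma coef_j_of_ne_one (x : S.A) {k : G} (hk : k ≠ 1) : S.coef (S.j x) k = 0 := by
  classical
  simpa [S.u_one, hk] using congr_fun (S.coef_j_mul_u x 1) k

lemma coef_u_eq_zero_or_one (m k : G) : S.coef (S.u m) k = 0 ∨ S.coef (S.u m) k = 1 := by
  classical
  have hcoef := congr_fun (S.coef_j_mul_u 1 m) k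
  rw [map_one, one_mul] at hcoef
  rw [hcoef, Pi.single_apply]
  split_ifs <;> simp

variable {S}

lemma IsDerA.map_zero {d : S.A → S.H0} (hd : S.IsDerA d) : d 0 = 0 := by
  simpa using hd.2.1 0 0

lemma IsDerA.map_one {d : S.A → S.H0} (hd : S.IsDerA d) : d 1 = 0 := by
  have h1 : d 1 = d 1 + d 1 := by simpa [S.lm0_one, S.rm0_one] using hd.2.2 1 1
  exact left_eq_add.mp h1

lemma ext_u_eq_zero {d : S.A → S.H0} (hd : S.IsDerA d) (h m : G) : S.ext d h (S.u m) = 0 := by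
  have hzero : ∀ k g : G, d (S.α g (S.coef (S.u m) k)) = 0 := fun k g => by
    rcases S.coef_u_eq_zero_or_one m k with hk | hk <;> simp [hk, hd.map_zero, hd.map_one]
  simp [ext, Jmul, hzero]

lemma p_ext_j_of_ne {d : S.A → S.H0} (hd : S.IsDerA d) (x : S.A) {a b h : G}
    (hb : b ≠ a⁻¹ * h) : S.p a b (S.ext d h (S.j x)) = 0 := by
  suffices hsum : ∀ k g : G, S.p a (b * h⁻¹) (S.lm (star (S.u g))
      (S.rm (S.u g * S.u k) (S.ι (d (S.α g (S.coef (S.j x) k)))))) = 0 by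
    simp only [ext, p_Jmul_one_star_u, map_sum, hsum, Finset.sum_const_zero, map_zero]
  intro k g
  by_cases hk : k = 1
  · subst hk
    rw [S.u_star, S.u_mul, mul_one]
    refine S.p_lm_u_rm_u_ι_of_ne ?_ _
    rintro ⟨⟨⟩⟩
    exact hb (by rw [inv_inv, inv_mul_cancel_right])
  · simp [S.coef_j_of_ne_one x hk, hd.map_zero]

end CP

theorem stmt_7_general {G : Type*} [Group G] [Fintype G] (S : CP G) [DecidableEq S.B]
    (X : Finset S.A)
    (Y : Finset S.B) (hY : Y = X.image S.j ∪ Finset.univ.image S.u)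
    (d : S.A → S.H0) (hd : S.IsDerA d) (h h' : G) (hne : h ≠ h') :
    S.dip Y (S.ext d h) (S.ext d h') = 0 := by
  refine Finset.sum_eq_zero fun y hy => ?_
  rw [hY, Finset.mem_union, Finset.mem_image, Finset.mem_image] at hy
  rcases hy with ⟨x, -, rfl⟩ | ⟨m, -, rfl⟩
  · refine S.inner_eq_zero_of_p_disjoint fun a b => ?_
    by_cases hb : b = a⁻¹ * h
    · refine Or.inr (CP.p_ext_j_of_ne hd x ?_)
      rw [hb]
      exact fun hcon => hne (mul_left_cancel hcon)
    · exact Or.inl (CP.p_ext_j_of_ne hd x hb)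
  · rw [CP.ext_u_eq_zero hd, inner_zero_left]

theorem stmt_7 {G : Type*} [Group G] [Fintype G] (S : CP G) [DecidableEq S.B]
    (X : Finset S.A) (hX : S.GenA X)
    (Y : Finset S.B) (hY : Y = X.image S.j ∪ Finset.univ.image S.u)
    (d : S.A → S.H0) (hd : S.IsDerA d) (h h' : G) (hne : h ≠ h') :
    S.dip Y (S.ext d h) (S.ext d h') = 0 :=
  stmt_7_general S X Y hY d hd h h' hne
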